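/- arXiv:quant-ph/0611133 — 2 statements merged into one kernel-verified Lean document; each statement's English description precedes it below -/
import Mathlib

section
/- Let ρ_0 and ρ_1 be positive semi-definite operators on a finite-dimensional Hilbert space H with range(ρ_0) ∩ range(ρ_1) = {0} and range(ρ_0) + range(ρ_1) = H, and let Σ = ρ_0 + ρ_1. Then for i = 0,1, the operator P_i := √ρ_i Σ^{-1} √ρ_i is the orthogonal projection onto the range of ρ_i. -/
/-!
Since the ranges of `ρ₀` and `ρ₁` span, `Σ = ρ₀ + ρ₁` has trivial kernel: a kernel vector
`x` satisfies `x⋆ρ₀x + x⋆ρ₁x = 0`, so `ρ₀x = ρ₁x = 0` and `x` is orthogonal to both ranges.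
For `v ∈ range ρ₀` and `y = Σ⁻¹v`, the vector `ρ₁y = v - ρ₀y` lies in both ranges, hence
vanishes, so `ρ₀Σ⁻¹` is the identity on `range ρ₀ = range √ρ₀`. With `S = √ρ₀` this reads
`S S Σ⁻¹ S = S`, which makes `P = S Σ⁻¹ S` a Hermitian idempotent with `P S = S`, so its range
is `range S`.
-/

open Matrix ComplexOrder

/-- The positive semidefinite square root of a positive semidefinite matrix
(the definition removed from Mathlib, restored with its old meaning). -/
noncomputable def Matrix.PosSemidef.sqrt {n : Type*} [Fintype n] [DecidableEq n]
    {𝕜 : Type*} [RCLike 𝕜] {A : Matrix n n 𝕜} (hA : A.PosSemidef) : Matrix n n 𝕜 :=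
  hA.1.eigenvectorUnitary.1 * diagonal ((↑) ∘ (fun x => Real.sqrt x) ∘ hA.1.eigenvalues) *
    (star hA.1.eigenvectorUnitary : Matrix n n 𝕜)

namespace Matrix

variable {n R 𝕜 : Type*} [Fintype n]

def IsOrthogonalProjectionOnto [CommRing R] [StarRing R] (P : Matrix n n R)
    (V : Submodule R (n → R)) : Prop :=
  P * P = P ∧ Pᴴ = P ∧ LinearMap.range P.mulVecLin = V

theorem range_mulVecLin_mul_le {m p : Type*} [Fintype p] [CommSemiring R] (A : Matrix m n R)
    (B : Matrix n p R) :
    LinearMap.range (A * B).mulVecLin ≤ LinearMap.range A.mulVecLin := by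
  rw [mulVecLin_mul]
  exact LinearMap.range_comp_le_range _ _

theorem isOrthogonalProjectionOnto_mul_mul [CommRing R] [StarRing R] {S M : Matrix n n R}
    (hS : S.IsHermitian) (hM : M.IsHermitian) (h : S * S * M * S = S) :
    (S * M * S).IsOrthogonalProjectionOnto (LinearMap.range S.mulVecLin) := by
  have hPS : S * M * S * S = S := by
    simpa only [conjTranspose_mul, hS.eq, hM.eq, Matrix.mul_assoc] using congrArg (·ᴴ) h
  refine ⟨?_, ?_, ?_⟩
  · calc S * M * S * (S * M * S) = S * M * (S * S * M * S) := by simp only [Matrix.mul_assoc]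
      _ = S * M * S := by rw [h]
  · rw [conjTranspose_mul, conjTranspose_mul, hS.eq, hM.eq, Matrix.mul_assoc]
  · refine le_antisymm ?_ ?_
    · rw [Matrix.mul_assoc]
      exact range_mulVecLin_mul_le _ _
    · conv_lhs => rw [← hPS]
      exact range_mulVecLin_mul_le _ _

theorem IsHermitian.star_dotProduct_eq_zero_of_mem_range [CommSemiring R] [StarRing R]
    {M : Matrix n n R} (hM : M.IsHermitian) {x v : n → R} (hx : M *ᵥ x = 0)
    (hv : v ∈ LinearMap.range M.mulVecLin) : star x ⬝ᵥ v = 0 := by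
  obtain ⟨y, rfl⟩ := hv
  rw [mulVecLin_apply, dotProduct_mulVec, ← hM.eq, ← star_mulVec, hx, star_zero, zero_dotProduct]

variable [DecidableEq n]

theorem mul_nonsing_inv_add_mul_of_range_le [CommRing R] {A B C : Matrix n n R}
    (hinf : LinearMap.range A.mulVecLin ⊓ LinearMap.range B.mulVecLin = ⊥)
    (hAB : IsUnit (A + B)) (hC : LinearMap.range C.mulVecLin ≤ LinearMap.range A.mulVecLin) :
    A * (A + B)⁻¹ * C = C := by
  rw [ext_iff_mulVec]
  intro v
  set y := (A + B)⁻¹ *ᵥ (C *ᵥ v)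
  have hsum : A *ᵥ y + B *ᵥ y = C *ᵥ v := by
    rw [← add_mulVec, mulVec_mulVec, mul_nonsing_inv _ ((isUnit_iff_isUnit_det _).mp hAB),
      one_mulVec]
  have hBy : B *ᵥ y = 0 := by
    rw [← Submodule.mem_bot R, ← hinf, Submodule.mem_inf]
    refine ⟨?_, ⟨y, rfl⟩⟩
    rw [← add_sub_cancel_left (A *ᵥ y) (B *ᵥ y), hsum]
    exact Submodule.sub_mem _ (hC ⟨v, rfl⟩) ⟨y, rfl⟩
  rw [← mulVec_mulVec, ← mulVec_mulVec]
  change A *ᵥ y = C *ᵥ v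
  rw [← hsum, hBy, add_zero]

namespace PosSemidef

variable [RCLike 𝕜] {A B : Matrix n n 𝕜}

theorem posSemidef_sqrt (hA : A.PosSemidef) : hA.sqrt.PosSemidef := by
  refine PosSemidef.mul_mul_conjTranspose_same ?_ hA.1.eigenvectorUnitary.1
  rw [posSemidef_diagonal_iff]
  intro i
  simp only [Function.comp_apply, RCLike.ofReal_nonneg]
  exact Real.sqrt_nonneg _

theorem sqrt_mul_self (hA : A.PosSemidef) : hA.sqrt * hA.sqrt = A := by
  set U : Matrix n n 𝕜 := hA.1.eigenvectorUnitary.1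
  set D : Matrix n n 𝕜 := diagonal ((↑) ∘ (fun x => Real.sqrt x) ∘ hA.1.eigenvalues)
  have hU : star U * U = 1 := Unitary.coe_star_mul_self _
  have hD : D * D = diagonal (RCLike.ofReal ∘ hA.1.eigenvalues) := by
    rw [diagonal_mul_diagonal]
    congr 1
    funext i
    simp only [Function.comp_apply, ← RCLike.ofReal_mul,
      Real.mul_self_sqrt (hA.eigenvalues_nonneg i)]
  conv_rhs => rw [hA.1.spectral_theorem, Unitary.conjStarAlgAut_apply]
  have hsqrt : hA.sqrt = U * D * star U := rfl
  calc hA.sqrt * hA.sqrt = U * D * (star U * U) * D * star U := by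
        simp only [hsqrt, Matrix.mul_assoc]
    _ = _ := by rw [hU, Matrix.mul_one, Matrix.mul_assoc U D D, hD]

theorem range_sqrt (hA : A.PosSemidef) :
    LinearMap.range hA.sqrt.mulVecLin = LinearMap.range A.mulVecLin := by
  have hle := range_mulVecLin_mul_le hA.sqrt hA.sqrt
  rw [hA.sqrt_mul_self] at hle
  have hrank : hA.sqrt.rank = A.rank := by
    rw [← rank_conjTranspose_mul_self, hA.posSemidef_sqrt.1.eq, hA.sqrt_mul_self]
  exact (Submodule.eq_of_le_of_finrank_le hle hrank.le).symm

theorem isUnit_add_of_range_sup_eq_top (hA : A.PosSemidef) (hB : B.PosSemidef)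
    (hsup : LinearMap.range A.mulVecLin ⊔ LinearMap.range B.mulVecLin = ⊤) :
    IsUnit (A + B) := by
  rw [← mulVec_injective_iff_isUnit]
  change Function.Injective (A + B).mulVecLin
  rw [← LinearMap.ker_eq_bot, LinearMap.ker_eq_bot']
  intro x hx
  have hsum : star x ⬝ᵥ A *ᵥ x + star x ⬝ᵥ B *ᵥ x = 0 := by
    rw [← dotProduct_add, ← add_mulVec, ← mulVecLin_apply, hx, dotProduct_zero]
  obtain ⟨hAx, hBx⟩ := (add_eq_zero_iff_of_nonneg (hA.dotProduct_mulVec_nonneg x)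
    (hB.dotProduct_mulVec_nonneg x)).mp hsum
  obtain ⟨a, ha, b, hb, rfl⟩ := Submodule.mem_sup.mp (hsup ▸ Submodule.mem_top : x ∈ _)
  rw [← dotProduct_star_self_eq_zero, dotProduct_add,
    hA.1.star_dotProduct_eq_zero_of_mem_range ((hA.dotProduct_mulVec_zero_iff _).mp hAx) ha,
    hB.1.star_dotProduct_eq_zero_of_mem_range ((hB.dotProduct_mulVec_zero_iff _).mp hBx) hb,
    add_zero]

theorem isOrthogonalProjectionOnto_sqrt_mul_inv_add_mul_sqrt (hA : A.PosSemidef)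
    (hB : B.IsHermitian) (hinf : LinearMap.range A.mulVecLin ⊓ LinearMap.range B.mulVecLin = ⊥)
    (hAB : IsUnit (A + B)) :
    (hA.sqrt * (A + B)⁻¹ * hA.sqrt).IsOrthogonalProjectionOnto
      (LinearMap.range A.mulVecLin) := by
  rw [← hA.range_sqrt]
  refine isOrthogonalProjectionOnto_mul_mul hA.posSemidef_sqrt.1 (hA.1.add hB).inv ?_
  rw [hA.sqrt_mul_self]
  exact mul_nonsing_inv_add_mul_of_range_le hinf hAB hA.range_sqrt.le

end PosSemidef

end Matrix

/-- Under trivial intersection and spanning of the ranges,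
`Pᵢ := √ρᵢ Σ⁻¹ √ρᵢ` (with `Σ = ρ₀ + ρ₁`) is the orthogonal projection onto
the range of `ρᵢ`, for `i = 0, 1`: it is idempotent, Hermitian, and its
range is the range of `ρᵢ`. -/
theorem sqrt_inv_sqrt_is_proj {n : ℕ}
    {ρ₀ ρ₁ : Matrix (Fin n) (Fin n) ℂ}
    (h₀ : ρ₀.PosSemidef) (h₁ : ρ₁.PosSemidef)
    (hinf : LinearMap.range ρ₀.mulVecLin ⊓ LinearMap.range ρ₁.mulVecLin = ⊥)
    (hsup : LinearMap.range ρ₀.mulVecLin ⊔ LinearMap.range ρ₁.mulVecLin = ⊤)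
    {P₀ P₁ : Matrix (Fin n) (Fin n) ℂ}
    (hP₀ : P₀ = h₀.sqrt * (ρ₀ + ρ₁)⁻¹ * h₀.sqrt)
    (hP₁ : P₁ = h₁.sqrt * (ρ₀ + ρ₁)⁻¹ * h₁.sqrt) :
    (P₀ * P₀ = P₀ ∧ P₀ᴴ = P₀ ∧
      LinearMap.range P₀.mulVecLin = LinearMap.range ρ₀.mulVecLin) ∧
    (P₁ * P₁ = P₁ ∧ P₁ᴴ = P₁ ∧
      LinearMap.range P₁.mulVecLin = LinearMap.range ρ₁.mulVecLin) := by
  have hunit : IsUnit (ρ₀ + ρ₁) := h₀.isUnit_add_of_range_sup_eq_top h₁ hsup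
  subst hP₀ hP₁
  refine ⟨h₀.isOrthogonalProjectionOnto_sqrt_mul_inv_add_mul_sqrt h₁.1 hinf hunit, ?_⟩
  rw [add_comm ρ₀ ρ₁] at hunit ⊢
  exact h₁.isOrthogonalProjectionOnto_sqrt_mul_inv_add_mul_sqrt h₀.1 (inf_comm _ _ |>.trans hinf)
    hunit
end

section
/- Let A and B be positive semi-definite n×n matrices and let (A+B)^{-1} denote the Moore–Penrose pseudo-inverse of A+B. Then the parallel addition A : B := A (A+B)^{-1} B is Hermitian and its range equals range(A) ∩ range(B). -/
open Matrix ComplexOrder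

/-- `X` satisfies the Moore–Penrose conditions for `M`. -/
def IsMoorePenroseInv {n : ℕ} (M X : Matrix (Fin n) (Fin n) ℂ) : Prop :=
  M * X * M = M ∧ X * M * X = X ∧ (M * X)ᴴ = M * X ∧ (X * M)ᴴ = X * M

/-!
Positivity gives `ker M ⊆ ker A ∩ ker B` for `M = A + B`, so every generalized inverse `X`
of `M` (`M X M = M`) satisfies `A X M = A`; dually, applied to the generalized inverse `Xᴴ`,
`M X A = A`.
Expanding `M = A + B` in both identities yields `A X B = B X A`, so the range of `A X B` lies in
`range A ∩ range B`; conversely, if `x = A u = B v` then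
`A X B (u + v) = B X x + A X x = M X A u = x`. Hermiticity follows from
`(A X B)ᴴ = B Xᴴ A = A Xᴴ B`, since `A X B` does not depend on the choice of generalized
inverse.
-/

namespace Matrix

variable {m n : Type*} [Fintype n]

theorem mul_mul_eq_self_of_ker_le {R : Type*} [Ring R] {A : Matrix m n R} {M Y : Matrix n n R}
    (hY : M * Y * M = M) (hker : ∀ v, M *ᵥ v = 0 → A *ᵥ v = 0) : A * Y * M = A := by
  refine ext_iff_mulVec.mpr fun v => ?_
  have hM : M *ᵥ ((Y * M) *ᵥ v - v) = 0 := by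
    rw [mulVec_sub, mulVec_mulVec, ← Matrix.mul_assoc, hY, sub_self]
  have := hker _ hM
  rwa [mulVec_sub, sub_eq_zero, mulVec_mulVec, ← Matrix.mul_assoc] at this

theorem range_mulVecLin_mul_mul_eq_inf {R : Type*} [CommRing R] {A B Y : Matrix n n R}
    (hcomm : A * Y * B = B * Y * A) (hA : (A + B) * Y * A = A) :
    LinearMap.range (A * Y * B).mulVecLin =
      LinearMap.range A.mulVecLin ⊓ LinearMap.range B.mulVecLin := by
  refine le_antisymm (le_inf ?_ ?_) ?_
  · rw [Matrix.mul_assoc, mulVecLin_mul]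
    exact LinearMap.range_comp_le_range _ _
  · rw [hcomm, Matrix.mul_assoc, mulVecLin_mul]
    exact LinearMap.range_comp_le_range _ _
  · rintro x ⟨⟨u, rfl⟩, ⟨v, hv⟩⟩
    refine ⟨u + v, ?_⟩
    simp only [mulVecLin_apply] at hv ⊢
    calc (A * Y * B) *ᵥ (u + v) = (B * Y) *ᵥ (A *ᵥ u) + (A * Y) *ᵥ (B *ᵥ v) := by
          rw [mulVec_add, hcomm, mulVec_mulVec, mulVec_mulVec, ← hcomm]
      _ = ((A + B) * Y * A) *ᵥ u := by
          rw [hv, ← add_mulVec, mulVec_mulVec, add_comm (B * Y), ← add_mul]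
      _ = A *ᵥ u := by rw [hA]

theorem IsHermitian.mul_conjTranspose_mul_self {R : Type*} [Semiring R] [StarRing R]
    {M Y : Matrix n n R} (hM : M.IsHermitian) (hY : M * Y * M = M) : M * Yᴴ * M = M := by
  simpa only [conjTranspose_mul, hM.eq, Matrix.mul_assoc] using congrArg (·ᴴ) hY

variable {𝕜 : Type*} [RCLike 𝕜]

theorem PosSemidef.mulVec_eq_zero_of_add_mulVec_eq_zero {A B : Matrix n n 𝕜}
    (hA : A.PosSemidef) (hB : B.PosSemidef) {v : n → 𝕜} (hv : (A + B) *ᵥ v = 0) :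
    A *ᵥ v = 0 := by
  have hsum : star v ⬝ᵥ A *ᵥ v + star v ⬝ᵥ B *ᵥ v = 0 := by
    rw [← dotProduct_add, ← add_mulVec, hv, dotProduct_zero]
  exact (hA.dotProduct_mulVec_zero_iff v).mp
    ((add_eq_zero_iff_of_nonneg (hA.dotProduct_mulVec_nonneg v)
      (hB.dotProduct_mulVec_nonneg v)).mp hsum).1

section ParallelSum

variable {A B Y : Matrix n n 𝕜}

theorem PosSemidef.mul_mul_add_eq_self (hA : A.PosSemidef) (hB : B.PosSemidef)
    (hY : (A + B) * Y * (A + B) = A + B) : A * Y * (A + B) = A :=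
  mul_mul_eq_self_of_ker_le hY fun _ => hA.mulVec_eq_zero_of_add_mulVec_eq_zero hB

theorem PosSemidef.add_mul_mul_eq_self (hA : A.PosSemidef) (hB : B.PosSemidef)
    (hY : (A + B) * Y * (A + B) = A + B) : (A + B) * Y * A = A := by
  have hM := (hA.add hB).1
  have hAYH := hA.mul_mul_add_eq_self hB (hM.mul_conjTranspose_mul_self hY)
  simpa only [conjTranspose_mul, hM.eq, hA.1.eq, conjTranspose_conjTranspose,
    Matrix.mul_assoc] using congrArg (·ᴴ) hAYH

theorem PosSemidef.mul_mul_comm_of_add (hA : A.PosSemidef) (hB : B.PosSemidef)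
    (hY : (A + B) * Y * (A + B) = A + B) : A * Y * B = B * Y * A := by
  have hleft := hA.mul_mul_add_eq_self hB hY
  have hright := hA.add_mul_mul_eq_self hB hY
  rw [mul_add] at hleft
  rw [add_mul, add_mul] at hright
  exact add_left_cancel (hleft.trans hright.symm)

theorem PosSemidef.isHermitian_mul_mul (hA : A.PosSemidef) (hB : B.PosSemidef)
    (hY : (A + B) * Y * (A + B) = A + B) : (A * Y * B).IsHermitian := by
  have hYH := (hA.add hB).1.mul_conjTranspose_mul_self hY
  have hBY : (A + B) * Y * B = B := by
    simpa only [add_comm B A] using hB.add_mul_mul_eq_self hA (by rwa [add_comm B A])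
  calc (A * Y * B)ᴴ = B * Yᴴ * A := by
        rw [conjTranspose_mul, conjTranspose_mul, hA.1.eq, hB.1.eq, Matrix.mul_assoc]
    _ = A * Yᴴ * B := (hA.mul_mul_comm_of_add hB hYH).symm
    _ = A * Yᴴ * ((A + B) * Y * B) := by rw [hBY]
    _ = A * Yᴴ * (A + B) * Y * B := by simp only [Matrix.mul_assoc]
    _ = A * Y * B := by rw [hA.mul_mul_add_eq_self hB hYH]

end ParallelSum

end Matrix

/-- For positive semi-definite `A`, `B` and `X` the Moore–Penrose
pseudo-inverse of `A + B`, the parallel addition `A : B = A X B` is Hermitian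
and its range is `range A ∩ range B`. -/
theorem parallel_addition_hermitian_range {n : ℕ}
    {A B X : Matrix (Fin n) (Fin n) ℂ}
    (hA : A.PosSemidef) (hB : B.PosSemidef)
    (hX : IsMoorePenroseInv (A + B) X) :
    (A * X * B)ᴴ = A * X * B ∧
    LinearMap.range (A * X * B).mulVecLin =
      LinearMap.range A.mulVecLin ⊓ LinearMap.range B.mulVecLin := by
  have hY : (A + B) * X * (A + B) = A + B := hX.1
  exact ⟨hA.isHermitian_mul_mul hB hY,
    range_mulVecLin_mul_mul_eq_inf (hA.mul_mul_comm_of_add hB hY) (hA.add_mul_mul_eq_self hB hY)⟩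
end
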